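/- Let k be a field, R = k[x,y,z]/(x² + yz), and D the differential R-module R² with differentiation given by the matrix A = [[x, y],[z, −x]]. Then the image of the differentiation is contained in (x,y,z)·R², and consequently D is not contractible. -/
import Mathlib

set_option maxHeartbeats 1000000
set_option synthInstance.maxHeartbeats 1000000

open MvPolynomial

/-- The hypersurface ring `R = k[x,y,z]/(x² + yz)`. -/
abbrev hyperRing (k : Type) [Field k] :=
  MvPolynomial (Fin 3) k ⧸
    Ideal.span {(X 0 : MvPolynomial (Fin 3) k) ^ 2 + X 1 * X 2}

/-- The class of `X i` in `R = k[x,y,z]/(x² + yz)`. -/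
noncomputable def hyperGen (k : Type) [Field k] (i : Fin 3) : hyperRing k :=
  Ideal.Quotient.mk
    (Ideal.span {(X 0 : MvPolynomial (Fin 3) k) ^ 2 + X 1 * X 2}) (X i)

/-- The square-zero matrix `[[x, y],[z, −x]]` over `R = k[x,y,z]/(x² + yz)`. -/
noncomputable def hyperA (k : Type) [Field k] : Matrix (Fin 2) (Fin 2) (hyperRing k) :=
  !![hyperGen k 0, hyperGen k 1; hyperGen k 2, -(hyperGen k 0)]

section Aux

variable {R : Type*} [CommRing R]

lemma aux_comp_mem {I : Ideal R} {v : Fin 2 → R}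
    (h : v ∈ I • (⊤ : Submodule R (Fin 2 → R))) (i : Fin 2) : v i ∈ I := by
  refine Submodule.smul_induction_on h (fun r hr n _ => ?_) (fun a b ha hb => ?_)
  · simpa using I.mul_mem_right (n i) hr
  · simpa using I.add_mem ha hb

lemma aux_mem_smul_top {I : Ideal R} {v : Fin 2 → R}
    (h : ∀ i, v i ∈ I) : v ∈ I • (⊤ : Submodule R (Fin 2 → R)) := by
  have hv : v = ∑ i : Fin 2, v i • (Pi.single i 1 : Fin 2 → R) := by
    funext j
    fin_cases j <;>
      simp [Fin.sum_univ_two, Pi.single_apply]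
  rw [hv]
  exact Submodule.sum_mem _ fun i _ => Submodule.smul_mem_smul (h i) trivial

end Aux

lemma hyper_one_notMem (k : Type) [Field k] :
    (1 : hyperRing k) ∉
      (Ideal.span {hyperGen k 0, hyperGen k 1, hyperGen k 2} : Ideal (hyperRing k)) := by
  set p : MvPolynomial (Fin 3) k := X 0 ^ 2 + X 1 * X 2 with hp
  have hker : ∀ a ∈ Ideal.span {p}, (aeval (fun _ => (0:k))).toRingHom a = 0 := by
    intro a ha
    rw [Ideal.mem_span_singleton] at ha
    obtain ⟨c, rfl⟩ := ha
    simp [hp]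
  set φ : hyperRing k →+* k :=
    Ideal.Quotient.lift _ ((aeval (fun _ => (0:k))).toRingHom) hker with hφ
  intro h1
  have hle : (Ideal.span {hyperGen k 0, hyperGen k 1, hyperGen k 2} : Ideal (hyperRing k))
      ≤ RingHom.ker φ := by
    rw [Ideal.span_le]
    intro a ha
    simp only [Set.mem_insert_iff, Set.mem_singleton_iff] at ha
    rcases ha with rfl | rfl | rfl <;>
      simp [RingHom.mem_ker, hφ, hyperGen, Ideal.Quotient.lift_mk]
  have := hle h1
  rw [RingHom.mem_ker, map_one] at this
  exact one_ne_zero this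

/-- The image of the differentiation of the differential module given by
`A = [[x,y],[z,−x]]` over `R = k[x,y,z]/(x²+yz)` lies in `(x,y,z)·R²`; consequently
this differential module is not contractible: it is not isomorphic, as a
differential module, to any `(C ⊕ C, (c',c'') ↦ (c'',0))`. -/
theorem hypersurface_not_contractible (k : Type) [Field k] :
    (LinearMap.range (hyperA k).mulVecLin ≤
      (Ideal.span {hyperGen k 0, hyperGen k 1, hyperGen k 2} :
          Ideal (hyperRing k)) •
        (⊤ : Submodule (hyperRing k) (Fin 2 → hyperRing k))) ∧
    ∀ (C : Type) [AddCommGroup C] [Module (hyperRing k) C]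
      (e : (Fin 2 → hyperRing k) ≃ₗ[hyperRing k] C × C),
      ¬ (∀ v, e ((hyperA k).mulVecLin v) = ((e v).2, 0)) := by
  set I : Ideal (hyperRing k) :=
    Ideal.span {hyperGen k 0, hyperGen k 1, hyperGen k 2} with hI
  have hgen : ∀ i : Fin 3, hyperGen k i ∈ I := by
    intro i
    apply Ideal.subset_span
    fin_cases i <;> simp
  have part1 : LinearMap.range (hyperA k).mulVecLin ≤
      I • (⊤ : Submodule (hyperRing k) (Fin 2 → hyperRing k)) := by
    rintro w ⟨v, rfl⟩
    apply aux_mem_smul_top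
    intro i
    have : (hyperA k).mulVecLin v i =
        (hyperA k) i 0 * v 0 + (hyperA k) i 1 * v 1 := by
      simp [Matrix.mulVecLin_apply, Matrix.mulVec, dotProduct, Fin.sum_univ_two]
    rw [this]
    fin_cases i
    · exact I.add_mem (I.mul_mem_right _ (by simpa [hyperA] using hgen 0))
        (I.mul_mem_right _ (by simpa [hyperA] using hgen 1))
    · refine I.add_mem (I.mul_mem_right _ (by simpa [hyperA] using hgen 2))
        (I.mul_mem_right _ ?_)
      simpa [hyperA] using I.neg_mem (hgen 0)
  refine ⟨part1, ?_⟩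
  intro C _ _ e he
  -- every (c, 0) lies in I • ⊤
  have hC : ∀ c : C, (c, (0:C)) ∈ I • (⊤ : Submodule (hyperRing k) (C × C)) := by
    intro c
    have h1 : (hyperA k).mulVecLin (e.symm (0, c)) ∈
        I • (⊤ : Submodule (hyperRing k) (Fin 2 → hyperRing k)) :=
      part1 ⟨_, rfl⟩
    have h2 : e ((hyperA k).mulVecLin (e.symm (0, c))) ∈
        Submodule.map (e : (Fin 2 → hyperRing k) →ₗ[hyperRing k] C × C)
          (I • (⊤ : Submodule (hyperRing k) (Fin 2 → hyperRing k))) :=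
      ⟨_, h1, rfl⟩
    rw [Submodule.map_smul'', Submodule.map_top, LinearEquiv.range]
      at h2
    have h3 := he (e.symm (0, c))
    rw [e.apply_symm_apply] at h3
    rw [h3] at h2
    exact h2
  -- (0, c) also lies in I • ⊤, via the swap
  have hC' : ∀ c : C, ((0:C), c) ∈ I • (⊤ : Submodule (hyperRing k) (C × C)) := by
    intro c
    have h2 : (LinearEquiv.prodComm (hyperRing k) C C) (c, 0) ∈
        Submodule.map ((LinearEquiv.prodComm (hyperRing k) C C) :
          (C × C) →ₗ[hyperRing k] C × C)
          (I • (⊤ : Submodule (hyperRing k) (C × C))) :=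
      ⟨_, hC c, rfl⟩
    rw [Submodule.map_smul'', Submodule.map_top,
      LinearEquiv.range] at h2
    simpa using h2
  -- hence everything in C × C is in I • ⊤
  have hall : ∀ w : C × C, w ∈ I • (⊤ : Submodule (hyperRing k) (C × C)) := by
    intro w
    have : w = (w.1, (0:C)) + ((0:C), w.2) := by simp
    rw [this]
    exact Submodule.add_mem _ (hC w.1) (hC' w.2)
  -- pull back to Fin 2 → R
  have hsingle : (Pi.single 0 1 : Fin 2 → hyperRing k) ∈
      I • (⊤ : Submodule (hyperRing k) (Fin 2 → hyperRing k)) := by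
    have h2 : e.symm (e (Pi.single 0 1)) ∈
        Submodule.map ((e.symm : (C × C) ≃ₗ[hyperRing k] (Fin 2 → hyperRing k)) :
          (C × C) →ₗ[hyperRing k] (Fin 2 → hyperRing k))
          (I • (⊤ : Submodule (hyperRing k) (C × C))) :=
      ⟨_, hall _, rfl⟩
    rw [Submodule.map_smul'', Submodule.map_top,
      LinearEquiv.range] at h2
    simpa using h2
  have := aux_comp_mem hsingle 0
  rw [Pi.single_eq_same] at this
  exact hyper_one_notMem k this
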